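/- arXiv:2111.00226 — 7 statements merged into one kernel-verified Lean document; each statement's English description precedes it below -/
import Mathlib

section
/- Let n > 0, let f : ℤ₂ⁿ → ℤ be an integer-valued weight function, and let A be the adjacency matrix of the weighted cubelike graph Cay(ℤ₂ⁿ, f), i.e. the complex matrix indexed by ℤ₂ⁿ with A u v = f(u + v). Define σ ∈ ℤ₂ⁿ by σᵢ = (∑_{y ∈ ℤ₂ⁿ, yᵢ = 1} f(y)) mod 2. If σ = 0, then Cay(ℤ₂ⁿ, f) is periodic with period π/2: for every vertex u ∈ ℤ₂ⁿ, the transition amplitude satisfies |⟨u| exp(-i(π/2)A) |u⟩| = 1, i.e. the (u,u) entry of the matrix exponential exp(-(i π/2)·A) has absolute value 1. -/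
/-!
The characters `u ↦ (-1) ^ (s ⬝ᵥ u)` of `ℤ₂ⁿ` (the rows of the Walsh–Hadamard matrix) diagonalise
the adjacency matrix of `Cay(ℤ₂ⁿ, f)`, with integer eigenvalues `λ_s = ∑_y (-1) ^ (s ⬝ᵥ y) f y`.
Now `λ_0 - λ_s = 2 ∑_{s ⬝ᵥ y = 1} f y`, and this last sum is congruent to `s ⬝ᵥ σ` modulo 2.
So `σ = 0` makes all eigenvalues congruent modulo 4, and then `exp (-(iπ/2) λ_s)` is the same
unit complex number `z` for every `s`, i.e. `exp (-(iπ/2) A) = z • 1`.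
-/

open Matrix Finset

open Complex in
lemma Complex.exp_neg_I_pi_div_two_mul_intCast_congr {a b : ℤ} (h : a ≡ b [ZMOD 4]) :
    exp (-(I * (Real.pi / 2)) * a) = exp (-(I * (Real.pi / 2)) * b) := by
  obtain ⟨k, hk⟩ := Int.modEq_iff_dvd.mp h
  have hb : -(I * (Real.pi / 2)) * b
      = -(I * (Real.pi / 2)) * a + (-k : ℤ) * (2 * Real.pi * I) := by
    rw [show (b : ℂ) = a + 4 * k by exact_mod_cast (by omega : b = a + 4 * k)]
    push_cast
    ring
  rw [hb, exp_add, exp_int_mul_two_pi_mul_I, mul_one]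

lemma Matrix.exp_eq_smul_one_of_mul_eq_diagonal_mul {m 𝔸 : Type*} [Fintype m] [DecidableEq m]
    [NormedCommRing 𝔸] [NormedAlgebra ℚ 𝔸] [CompleteSpace 𝔸] {W A : Matrix m m 𝔸} {d : m → 𝔸}
    {z : 𝔸} (hW : IsUnit W) (h : W * A = diagonal d * W) (hd : ∀ i, NormedSpace.exp (d i) = z) :
    NormedSpace.exp A = z • 1 := by
  have hdet := (isUnit_iff_isUnit_det W).mp hW
  have hA : A = W⁻¹ * diagonal d * W := by
    rw [Matrix.mul_assoc, ← h, nonsing_inv_mul_cancel_left _ _ hdet]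
  rw [hA, exp_conj' _ _ hW, exp_diagonal,
    show NormedSpace.exp d = fun _ => z from funext fun i => (Pi.coe_exp d i).trans (hd i),
    ← smul_one_eq_diagonal, Matrix.mul_smul, Matrix.mul_one, Matrix.smul_mul,
    nonsing_inv_mul _ hdet]

namespace CubelikeGraph

lemma eq_one_of_ne_zero {a : ZMod 2} (ha : a ≠ 0) : a = 1 := by
  revert a; decide

lemma ite_eq_one_eq_mul (a x : ZMod 2) : (if a = 1 then x else 0) = a * x := by
  revert a x; decide

noncomputable def signChar : AddChar (ZMod 2) ℂ :=
  AddChar.zmodChar 2 (by norm_num : (-1 : ℂ) ^ 2 = 1)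

lemma signChar_eq_one_sub (a : ZMod 2) : signChar a = 1 - 2 * a.val := by
  rw [signChar, AddChar.zmodChar_apply]
  have := ZMod.val_lt a
  interval_cases a.val <;> norm_num

variable {ι : Type*} [Fintype ι]

noncomputable def walshChar (s : ι → ZMod 2) : AddChar (ι → ZMod 2) ℂ where
  toFun u := signChar (s ⬝ᵥ u)
  map_zero_eq_one' := by simp
  map_add_eq_mul' u v := by simp [dotProduct_add, AddChar.map_add_eq_mul]

lemma walshChar_apply (s u : ι → ZMod 2) : walshChar s u = signChar (s ⬝ᵥ u) := rfl

lemma walshChar_comm (s u : ι → ZMod 2) : walshChar s u = walshChar u s := by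
  rw [walshChar_apply, walshChar_apply, dotProduct_comm]

@[simp]
lemma walshChar_zero : walshChar (0 : ι → ZMod 2) = 0 := by
  ext u
  simp [walshChar_apply]

lemma walshChar_mul_walshChar (s t u : ι → ZMod 2) :
    walshChar s u * walshChar t u = walshChar (s + t) u := by
  simp only [walshChar_apply, add_dotProduct, AddChar.map_add_eq_mul]

variable (ι) in
noncomputable def walshMatrix : Matrix (ι → ZMod 2) (ι → ZMod 2) ℂ :=
  of fun s u => walshChar s u

def cayleyMatrix (f : (ι → ZMod 2) → ℂ) : Matrix (ι → ZMod 2) (ι → ZMod 2) ℂ :=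
  of fun u v => f (u + v)

variable [DecidableEq ι]

lemma walshChar_ne_zero {s : ι → ZMod 2} (hs : s ≠ 0) : walshChar s ≠ 0 := by
  obtain ⟨i, hi⟩ := Function.ne_iff.mp hs
  refine AddChar.ne_zero_iff.mpr ⟨Pi.single i 1, ?_⟩
  rw [walshChar_apply, dotProduct_single, eq_one_of_ne_zero hi, mul_one, signChar_eq_one_sub]
  norm_num [ZMod.val_one]

lemma walshMatrix_mul_self : walshMatrix ι * walshMatrix ι = (2 ^ Fintype.card ι : ℂ) • 1 := by
  ext s t
  simp only [mul_apply, walshMatrix, of_apply, Matrix.smul_apply, one_apply]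
  simp_rw [walshChar_comm _ t, walshChar_mul_walshChar]
  split_ifs with hst
  · simp [hst, ZModModule.add_self]
  · have hst' : s + t ≠ 0 := by rwa [Ne, ← ZModModule.sub_eq_add, sub_eq_zero]
    simpa using AddChar.sum_eq_zero_iff_ne_zero.mpr (walshChar_ne_zero hst')

lemma isUnit_walshMatrix : IsUnit (walshMatrix ι) := by
  refine (isUnit_iff_isUnit_det _).mpr
    (isUnit_det_of_right_inverse (B := (2 ^ Fintype.card ι : ℂ)⁻¹ • walshMatrix ι) ?_)
  rw [Matrix.mul_smul, walshMatrix_mul_self, smul_smul, inv_mul_cancel₀ (by simp), one_smul]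

noncomputable def cayleyEigenvalue (f : (ι → ZMod 2) → ℂ) (s : ι → ZMod 2) : ℂ :=
  ∑ y, walshChar s y * f y

lemma walshMatrix_mul_cayleyMatrix (f : (ι → ZMod 2) → ℂ) :
    walshMatrix ι * cayleyMatrix f = diagonal (cayleyEigenvalue f) * walshMatrix ι := by
  ext s v
  rw [diagonal_mul, mul_apply]
  simp only [walshMatrix, cayleyMatrix, of_apply, cayleyEigenvalue, sum_mul]
  refine (Fintype.sum_equiv (Equiv.addRight v) _ _ fun y => ?_).symm
  simp [AddChar.map_add_eq_mul, add_assoc, ZModModule.add_self, mul_right_comm]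

lemma cayleyEigenvalue_intCast (f : (ι → ZMod 2) → ℤ) (s : ι → ZMod 2) :
    cayleyEigenvalue (fun y => (f y : ℂ)) s
      = ((∑ y, f y - 2 * ∑ y, ((s ⬝ᵥ y).val : ℤ) * f y : ℤ) : ℂ) := by
  push_cast
  simp only [cayleyEigenvalue, walshChar_apply, signChar_eq_one_sub, sub_mul, one_mul,
    sum_sub_distrib, mul_sum, mul_assoc]

def parityVector (f : (ι → ZMod 2) → ℤ) (i : ι) : ZMod 2 :=
  ((∑ y ∈ univ.filter (fun y : ι → ZMod 2 => y i = 1), f y : ℤ) : ZMod 2)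

lemma intCast_sum_val_dotProduct_mul (f : (ι → ZMod 2) → ℤ) (s : ι → ZMod 2) :
    ((∑ y, ((s ⬝ᵥ y).val : ℤ) * f y : ℤ) : ZMod 2) = s ⬝ᵥ parityVector f := by
  simp only [dotProduct, parityVector, sum_filter]
  push_cast
  simp only [ZMod.natCast_val, ZMod.cast_id', id, ite_eq_one_eq_mul, sum_mul, mul_sum]
  rw [sum_comm]
  exact sum_congr rfl fun y _ => sum_congr rfl fun i _ => by ring

lemma exists_cayleyEigenvalue_eq_intCast_modEq {f : (ι → ZMod 2) → ℤ} (hf : parityVector f = 0)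
    (s : ι → ZMod 2) :
    ∃ m : ℤ, cayleyEigenvalue (fun y => (f y : ℂ)) s = m ∧ m ≡ ∑ y, f y [ZMOD 4] := by
  refine ⟨_, cayleyEigenvalue_intCast f s, ?_⟩
  obtain ⟨k, hk⟩ : (2 : ℤ) ∣ ∑ y, ((s ⬝ᵥ y).val : ℤ) * f y :=
    (ZMod.intCast_zmod_eq_zero_iff_dvd _ 2).mp <| by
      rw [intCast_sum_val_dotProduct_mul, hf, dotProduct_zero]
  rw [hk, Int.modEq_iff_dvd]
  exact ⟨k, by ring⟩

end CubelikeGraph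

open CubelikeGraph in
theorem cubelike_periodic_of_sigma_zero_general
    (n : ℕ) (f : (Fin n → ZMod 2) → ℤ)
    (A : Matrix (Fin n → ZMod 2) (Fin n → ZMod 2) ℂ)
    (hA : ∀ u v, A u v = (f (u + v) : ℂ))
    (σ : Fin n → ZMod 2)
    (hσ : ∀ i, σ i = ((∑ y ∈ Finset.univ.filter (fun y : Fin n → ZMod 2 => y i = 1), f y : ℤ) : ZMod 2))
    (hσ0 : σ = 0) :
    ∀ u : Fin n → ZMod 2,
      ‖NormedSpace.exp ((-(Complex.I * (Real.pi / 2))) • A) u u‖ = 1 := by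
  intro u
  have hf : parityVector f = 0 := hσ0 ▸ (funext hσ).symm
  have hA' : A = cayleyMatrix fun y => (f y : ℂ) := Matrix.ext hA
  set c : ℂ := -(Complex.I * (Real.pi / 2)) with hc
  have hexp : NormedSpace.exp (c • A) = Complex.exp (c * ((∑ y, f y : ℤ) : ℂ)) • 1 := by
    refine exp_eq_smul_one_of_mul_eq_diagonal_mul isUnit_walshMatrix
      (d := c • cayleyEigenvalue fun y => (f y : ℂ)) ?_ fun s => ?_
    · rw [hA', Matrix.mul_smul, walshMatrix_mul_cayleyMatrix, ← Matrix.smul_mul, diagonal_smul]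
    · obtain ⟨m, hm, hmod⟩ := exists_cayleyEigenvalue_eq_intCast_modEq hf s
      rw [Pi.smul_apply, hm, smul_eq_mul, ← Complex.exp_eq_exp_ℂ,
        Complex.exp_neg_I_pi_div_two_mul_intCast_congr hmod]
  have hre :
      c * ((∑ y, f y : ℤ) : ℂ) = ((-(Real.pi / 2) * (∑ y, f y : ℤ) : ℝ) : ℂ) * Complex.I := by
    rw [hc]
    push_cast
    ring
  rw [hexp, Matrix.smul_apply, one_apply_eq, smul_eq_mul, mul_one, hre]
  exact Complex.norm_exp_ofReal_mul_I _

theorem cubelike_periodic_of_sigma_zero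
    (n : ℕ) (hn : 0 < n) (f : (Fin n → ZMod 2) → ℤ)
    (A : Matrix (Fin n → ZMod 2) (Fin n → ZMod 2) ℂ)
    (hA : ∀ u v, A u v = (f (u + v) : ℂ))
    (σ : Fin n → ZMod 2)
    (hσ : ∀ i, σ i = ((∑ y ∈ Finset.univ.filter (fun y : Fin n → ZMod 2 => y i = 1), f y : ℤ) : ZMod 2))
    (hσ0 : σ = 0) :
    ∀ u : Fin n → ZMod 2,
      ‖NormedSpace.exp ((-(Complex.I * (Real.pi / 2))) • A) u u‖ = 1 :=
  cubelike_periodic_of_sigma_zero_general n f A hA σ hσ hσ0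
end

section
/- Let n > 0, let f : ℤ₂ⁿ → ℤ, and let A be the adjacency matrix of Cay(ℤ₂ⁿ, f), i.e. A u v = f(u + v). Define σ ∈ ℤ₂ⁿ by σᵢ = (∑_{y ∈ ℤ₂ⁿ, yᵢ = 1} f(y)) mod 2. Then the evolution operator at time π/2 is, up to a global phase, the translation by σ: there exists λ ∈ ℂ with |λ| = 1 such that exp(-(i π/2)·A) = λ • ρ(σ), where ρ(σ) is the permutation matrix with entries ρ(σ) u v = 1 if u = σ + v and 0 otherwise. -/
/-!
The relation `A u v = f (u + v)` says `A = ∑ y, f y • ρ y`, a combination of the commuting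
involutions `ρ y`. For an involution `P` we have `exp (t • P) = cosh t • 1 + sinh t • P`, hence
`exp ((-(i π / 2) * m) • P) = (-i) ^ m • P ^ m`. Multiplying these factors over `y` gives the phase
`∏ y, (-i) ^ f y` times `ρ (∑ y, f y • y)`, and `∑ y, f y • y = σ` coordinatewise.
-/

open Matrix Finset Complex

section Involution

variable {𝔸 : Type*} [NormedRing 𝔸] [NormedAlgebra ℂ 𝔸] [CompleteSpace 𝔸]

theorem exp_smul_of_mul_self_eq_one {P : 𝔸} (hP : P * P = 1) (t : ℂ) :
    NormedSpace.exp (t • P) = cosh t • (1 : 𝔸) + sinh t • P := by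
  have hsq (k : ℕ) : P ^ (2 * k) = 1 := by rw [pow_mul, sq, hP, one_pow]
  refine (NormedSpace.exp_series_hasSum_exp' (𝕂 := ℂ) (t • P)).unique (.even_add_odd ?_ ?_)
  · convert (hasSum_cosh t).smul_const (1 : 𝔸) using 2 with k
    rw [smul_pow, hsq, smul_smul, div_eq_inv_mul]
  · convert (hasSum_sinh t).smul_const P using 2 with k
    rw [smul_pow, pow_succ P, hsq, one_mul, smul_smul, div_eq_inv_mul]

theorem exp_neg_I_pi_div_two_mul_int_smul_of_mul_self_eq_one {P : 𝔸} (hP : P * P = 1) (m : ℤ) :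
    NormedSpace.exp ((-(I * (Real.pi / 2)) * m) • P) = (-I) ^ m • if Even m then 1 else P := by
  have hexp : exp (-(I * (Real.pi / 2)) * m) = (-I) ^ m := by
    rw [← exp_neg_pi_div_two_mul_I, ← exp_int_mul]
    ring_nf
  have hexp_neg : exp (-(-(I * (Real.pi / 2)) * m)) = (-1) ^ m * (-I) ^ m := by
    rw [← mul_zpow, neg_one_mul, neg_neg]
    conv_rhs => rw [← exp_pi_div_two_mul_I, ← exp_int_mul]
    ring_nf
  rw [exp_smul_of_mul_self_eq_one hP, Complex.cosh, Complex.sinh, hexp, hexp_neg]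
  rcases Int.even_or_odd m with hm | hm
  · simp [hm, hm.neg_one_zpow]
  · simp [Int.not_even_iff_odd.mpr hm, hm.neg_one_zpow]

end Involution

section Translation

variable {R G : Type*} [Semiring R] [AddCommGroup G] [DecidableEq G]

variable (R) in
def translationMatrix (x : G) : Matrix G G R :=
  of fun u v => if u = x + v then 1 else 0

@[simp]
theorem translationMatrix_apply (x u v : G) :
    translationMatrix R x u v = if u = x + v then 1 else 0 :=
  rfl

theorem translationMatrix_zero : translationMatrix R (0 : G) = 1 := by
  ext u v
  simp [one_apply]

variable [Fintype G]

theorem translationMatrix_add (x y : G) :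
    translationMatrix R (x + y) = translationMatrix R x * translationMatrix R y := by
  ext u w
  simp [mul_apply, add_assoc]

theorem commute_translationMatrix (x y : G) :
    Commute (translationMatrix R x) (translationMatrix R y) := by
  rw [Commute, SemiconjBy, ← translationMatrix_add, ← translationMatrix_add, add_comm]

theorem sum_smul_translationMatrix (g : G → R) :
    ∑ y, g y • translationMatrix R y = of fun u v => g (u - v) := by
  ext u v
  simp [Matrix.sum_apply, ← sub_eq_iff_eq_add]

end Translation

theorem zsmul_eq_ite_even {G : Type*} [AddCommGroup G] [Module (ZMod 2) G] (m : ℤ) (x : G) :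
    m • x = if Even m then 0 else x := by
  rcases Int.even_or_odd' m with ⟨k, rfl | rfl⟩
  · simp [mul_comm 2 k, mul_zsmul, two_zsmul, ZModModule.add_self]
  · simp [add_zsmul, mul_comm 2 k, mul_zsmul, two_zsmul, ZModModule.add_self]

section Evolution

variable {G : Type*} [AddCommGroup G] [Module (ZMod 2) G] [Fintype G] [DecidableEq G]

open scoped Norms.Operator

theorem translationMatrix_mul_self (x : G) :
    translationMatrix ℂ x * translationMatrix ℂ x = 1 := by
  rw [← translationMatrix_add, ZModModule.add_self, translationMatrix_zero]

theorem exp_neg_I_pi_div_two_mul_int_smul_translationMatrix (m : ℤ) (x : G) :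
    NormedSpace.exp ((-(I * (Real.pi / 2)) * m) • translationMatrix ℂ x) =
      (-I) ^ m • translationMatrix ℂ (m • x) := by
  refine (exp_neg_I_pi_div_two_mul_int_smul_of_mul_self_eq_one
    (translationMatrix_mul_self x) m).trans ?_
  rw [zsmul_eq_ite_even]
  split_ifs <;> simp [translationMatrix_zero]

theorem exp_sum_smul_translationMatrix (s : Finset G) (g : G → ℤ) :
    NormedSpace.exp (∑ y ∈ s, (-(I * (Real.pi / 2)) * g y) • translationMatrix ℂ y) =
      (∏ y ∈ s, (-I) ^ g y) • translationMatrix ℂ (∑ y ∈ s, g y • y) := by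
  induction s using Finset.induction_on with
  | empty => simp [translationMatrix_zero]
  | insert a s ha ih =>
    have hcomm : Commute ((-(I * (Real.pi / 2)) * g a) • translationMatrix ℂ a)
        (∑ y ∈ s, (-(I * (Real.pi / 2)) * g y) • translationMatrix ℂ y) :=
      .sum_right _ _ _ fun y _ => ((commute_translationMatrix a y).smul_left _).smul_right _
    rw [sum_insert ha, sum_insert ha, prod_insert ha, Matrix.exp_add_of_commute _ _ hcomm, ih,
      exp_neg_I_pi_div_two_mul_int_smul_translationMatrix, translationMatrix_add, smul_mul_smul]

end Evolution

theorem sum_zsmul_apply_eq_sum_filter {ι : Type*} [Fintype ι] [DecidableEq ι]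
    (f : (ι → ZMod 2) → ℤ) (i : ι) :
    (∑ y, f y • y) i = ((∑ y ∈ univ.filter (fun y : ι → ZMod 2 => y i = 1), f y : ℤ) : ZMod 2) := by
  have hcoord (y : ι → ZMod 2) :
      (f y : ZMod 2) * y i = if y i = 1 then (f y : ZMod 2) else 0 := by
    rcases (by decide : ∀ a : ZMod 2, a = 0 ∨ a = 1) (y i) with h | h <;> simp [h]
  simp [Finset.sum_apply, zsmul_eq_mul, hcoord, Finset.sum_filter]

theorem cubelike_evolution_eq_phase_smul_translation_general
    (n : ℕ) (f : (Fin n → ZMod 2) → ℤ)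
    (A : Matrix (Fin n → ZMod 2) (Fin n → ZMod 2) ℂ)
    (hA : ∀ u v, A u v = (f (u + v) : ℂ))
    (σ : Fin n → ZMod 2)
    (hσ : ∀ i, σ i = ((∑ y ∈ Finset.univ.filter (fun y : Fin n → ZMod 2 => y i = 1), f y : ℤ) : ZMod 2))
    (ρ : (Fin n → ZMod 2) → Matrix (Fin n → ZMod 2) (Fin n → ZMod 2) ℂ)
    (hρ : ∀ x u v, ρ x u v = if u = x + v then 1 else 0) :
    ∃ lam : ℂ, ‖lam‖ = 1 ∧
      NormedSpace.exp ((-(Complex.I * (Real.pi / 2))) • A) = lam • ρ σ := by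
  have hρ_eq : ρ = translationMatrix ℂ := funext fun x => Matrix.ext (hρ x)
  have hA_eq : A = ∑ y, (f y : ℂ) • translationMatrix ℂ y := by
    rw [sum_smul_translationMatrix]
    ext u v
    simp [hA, ZModModule.sub_eq_add]
  have hσ_eq : σ = ∑ y, f y • y :=
    funext fun i => (hσ i).trans (sum_zsmul_apply_eq_sum_filter f i).symm
  refine ⟨∏ y, (-I) ^ f y, by simp [norm_prod, norm_zpow], ?_⟩
  rw [hA_eq, Finset.smul_sum, hρ_eq, hσ_eq, ← exp_sum_smul_translationMatrix]
  simp only [smul_smul]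

theorem cubelike_evolution_eq_phase_smul_translation
    (n : ℕ) (hn : 0 < n) (f : (Fin n → ZMod 2) → ℤ)
    (A : Matrix (Fin n → ZMod 2) (Fin n → ZMod 2) ℂ)
    (hA : ∀ u v, A u v = (f (u + v) : ℂ))
    (σ : Fin n → ZMod 2)
    (hσ : ∀ i, σ i = ((∑ y ∈ Finset.univ.filter (fun y : Fin n → ZMod 2 => y i = 1), f y : ℤ) : ZMod 2))
    (ρ : (Fin n → ZMod 2) → Matrix (Fin n → ZMod 2) (Fin n → ZMod 2) ℂ)
    (hρ : ∀ x u v, ρ x u v = if u = x + v then 1 else 0) :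
    ∃ lam : ℂ, ‖lam‖ = 1 ∧
      NormedSpace.exp ((-(Complex.I * (Real.pi / 2))) • A) = lam • ρ σ :=
  cubelike_evolution_eq_phase_smul_translation_general n f A hA σ hσ ρ hρ
end

section
/- Let n > 0, x ∈ ℤ₂ⁿ, c ∈ ℝ, and t ∈ ℝ. With H_n the n-qubit Hadamard matrix (entries H_n u v = (-1)^{⟨u,v⟩}/√(2ⁿ)) and D_x the diagonal matrix with entries D_x u u = (-1)^{⟨x,u⟩}, the evolution factor satisfies exp(-(i t c) • ρ(x)) = H_n * exp(-(i t c) • D_x) * H_n, where ρ(x) is the translation permutation matrix. -/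
/-!
The normalized Hadamard matrix `H` has the Walsh characters `w ↦ (-1) ^ ⟨u, w⟩` as its rows.
Since these characters are multiplicative in `u` and orthogonal, `H * diag(χ_a) * H` is the
translation by `a`; for `a = 0` this says `H * H = 1`. Hence `ρ(x) = H D_x H⁻¹`, and the matrix
exponential commutes with conjugation by a unit.
-/

open Matrix Finset

def signChar (R : Type*) [Ring R] : AddChar (ZMod 2) R where
  toFun s := (-1) ^ s.val
  map_zero_eq_one' := pow_zero _
  map_add_eq_mul' s t := by
    rw [ZMod.val_add, ← pow_add]
    exact (neg_one_pow_eq_pow_mod_two _).symm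

variable {ι R : Type*} [Fintype ι]

def walshChar [CommRing R] (u : ι → ZMod 2) : AddChar (ι → ZMod 2) R :=
  (signChar R).compAddMonoidHom (AddMonoidHom.mk' (u ⬝ᵥ ·) (dotProduct_add u))

section CommRing

variable [CommRing R]

lemma walshChar_apply (u w : ι → ZMod 2) : walshChar u w = (-1 : R) ^ (u ⬝ᵥ w).val := rfl

lemma walshChar_comm (u w : ι → ZMod 2) : (walshChar u w : R) = walshChar w u := by
  rw [walshChar_apply, walshChar_apply, dotProduct_comm]

lemma walshChar_add_left (u v w : ι → ZMod 2) :
    (walshChar (u + v) w : R) = walshChar u w * walshChar v w :=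
  (signChar R).map_add_eq_mul (u ⬝ᵥ w) (v ⬝ᵥ w) ▸ congrArg (signChar R) (add_dotProduct u v w)

@[simp]
lemma walshChar_zero : (walshChar 0 : AddChar (ι → ZMod 2) R) = 0 := by
  ext w
  rw [walshChar_apply, zero_dotProduct, ZMod.val_zero, pow_zero, AddChar.zero_apply]

variable [DecidableEq ι]

lemma walshChar_eq_zero_iff [Nontrivial R] (hR : ringChar R ≠ 2) (u : ι → ZMod 2) :
    (walshChar u : AddChar (ι → ZMod 2) R) = 0 ↔ u = 0 := by
  refine ⟨fun h => funext fun i => ?_, fun h => h ▸ walshChar_zero⟩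
  by_contra hi
  have hone : u i = 1 := (by decide : ∀ s : ZMod 2, s ≠ 0 → s = 1) _ hi
  have h1 := DFunLike.congr_fun h (Pi.single i 1)
  rw [walshChar_apply, dotProduct_single, mul_one, hone, ZMod.val_one, pow_one,
    AddChar.zero_apply] at h1
  exact Ring.neg_one_ne_one_of_char_ne_two hR h1

lemma sum_walshChar [IsDomain R] (hR : ringChar R ≠ 2) (u : ι → ZMod 2) :
    ∑ w, (walshChar u w : R) = if u = 0 then 2 ^ Fintype.card ι else 0 := by
  simp [AddChar.sum_eq_ite, walshChar_eq_zero_iff hR, ZMod.card]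

end CommRing

section Hadamard

variable [DecidableEq ι] {H : Matrix (ι → ZMod 2) (ι → ZMod 2) ℂ}

lemma hadamard_mul_diagonal_mul_hadamard
    (hH : ∀ u v, H u v = walshChar u v / Real.sqrt (2 ^ Fintype.card ι)) (a : ι → ZMod 2) :
    H * diagonal (walshChar a) * H = of fun u v => if u = a + v then 1 else 0 := by
  have hsq : (Real.sqrt (2 ^ Fintype.card ι) : ℂ) ^ 2 = 2 ^ Fintype.card ι := by
    rw [← Complex.ofReal_pow, Real.sq_sqrt (by positivity)]
    norm_cast
  have hterm : ∀ u v w, (H * diagonal (walshChar a) : Matrix (ι → ZMod 2) _ ℂ) u w * H w v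
      = walshChar (u + (a + v)) w / 2 ^ Fintype.card ι := by
    intro u v w
    rw [mul_diagonal, hH, hH, walshChar_add_left, walshChar_add_left, walshChar_comm w v, ← hsq]
    ring
  ext u v
  rw [mul_apply, of_apply]
  simp_rw [hterm]
  rw [← sum_div, sum_walshChar (by simp)]
  simp only [add_eq_zero_iff_eq_neg, ZModModule.neg_eq_self]
  split_ifs <;> simp

lemma hadamard_mul_self
    (hH : ∀ u v, H u v = walshChar u v / Real.sqrt (2 ^ Fintype.card ι)) : H * H = 1 := by
  have h := hadamard_mul_diagonal_mul_hadamard hH 0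
  rw [walshChar_zero, AddChar.coe_zero, Pi.one_def, diagonal_one, mul_one] at h
  rw [h]
  ext u v
  simp [one_apply]

end Hadamard

theorem exp_translation_eq_hadamard_conj_exp_general
    (n : ℕ) (x : Fin n → ZMod 2) (c t : ℝ)
    (H : Matrix (Fin n → ZMod 2) (Fin n → ZMod 2) ℂ)
    (hH : ∀ u v, H u v = (-1 : ℂ) ^ (∑ i, u i * v i : ZMod 2).val / Real.sqrt (2 ^ n))
    (D : Matrix (Fin n → ZMod 2) (Fin n → ZMod 2) ℂ)
    (hD : ∀ u v, D u v = if u = v then (-1 : ℂ) ^ (∑ i, x i * u i : ZMod 2).val else 0)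
    (ρ : Matrix (Fin n → ZMod 2) (Fin n → ZMod 2) ℂ)
    (hρ : ∀ u v, ρ u v = if u = x + v then 1 else 0) :
    NormedSpace.exp ((-(Complex.I * t * c)) • ρ) =
      H * NormedSpace.exp ((-(Complex.I * t * c)) • D) * H := by
  have hH' : ∀ u v, H u v = walshChar u v / Real.sqrt (2 ^ Fintype.card (Fin n)) := by
    intro u v
    rw [hH, Fintype.card_fin]
    rfl
  have hD' : D = diagonal (walshChar x) := by
    ext u v
    rw [hD, diagonal_apply]
    rfl
  have hρ' : ρ = H * D * H := by
    rw [hD', hadamard_mul_diagonal_mul_hadamard hH' x]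
    ext u v
    exact hρ u v
  let U : (Matrix (Fin n → ZMod 2) (Fin n → ZMod 2) ℂ)ˣ :=
    ⟨H, H, hadamard_mul_self hH', hadamard_mul_self hH'⟩
  rw [hρ', ← Matrix.smul_mul, ← Matrix.mul_smul]
  exact exp_units_conj U _

theorem exp_translation_eq_hadamard_conj_exp
    (n : ℕ) (hn : 0 < n) (x : Fin n → ZMod 2) (c t : ℝ)
    (H : Matrix (Fin n → ZMod 2) (Fin n → ZMod 2) ℂ)
    (hH : ∀ u v, H u v = (-1 : ℂ) ^ (∑ i, u i * v i : ZMod 2).val / Real.sqrt (2 ^ n))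
    (D : Matrix (Fin n → ZMod 2) (Fin n → ZMod 2) ℂ)
    (hD : ∀ u v, D u v = if u = v then (-1 : ℂ) ^ (∑ i, x i * u i : ZMod 2).val else 0)
    (ρ : Matrix (Fin n → ZMod 2) (Fin n → ZMod 2) ℂ)
    (hρ : ∀ u v, ρ u v = if u = x + v then 1 else 0) :
    NormedSpace.exp ((-(Complex.I * t * c)) • ρ) =
      H * NormedSpace.exp ((-(Complex.I * t * c)) • D) * H :=
  exp_translation_eq_hadamard_conj_exp_general n x c t H hH D hD ρ hρ
end

section
/- Let n > 0, f : ℤ₂ⁿ → ℤ, and let A u v = f(u + v) be the adjacency matrix of Cay(ℤ₂ⁿ, f). Then for every t ∈ ℝ and all u, v ∈ ℤ₂ⁿ, the transition amplitude has the spectral form: the (v,u) entry of exp(-(i t)·A) equals (1/2ⁿ) ∑_{g ∈ ℤ₂ⁿ} (-1)^{⟨g, u+v⟩} e^{-i t λ_g}, where λ_g = ∑_{x ∈ ℤ₂ⁿ} f(x) (-1)^{⟨g,x⟩}. -/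
/-!
The characters `walsh g x = (-1)^⟨g,x⟩` of `ℤ₂ⁿ` are the entries of the symmetric Walsh–Hadamard
matrix `H`, and their orthogonality gives `H * H = 2ⁿ • 1`. Fourier inversion on `ℤ₂ⁿ`,
`f (u + v) = 2⁻ⁿ ∑_g χ_g(u) χ_g(v) λ_g`, says that `H` diagonalises the Cayley matrix:
`A = H * diagonal λ * H⁻¹`. Hence `exp (c • A) = H * diagonal (exp (c • λ)) * H⁻¹`, and reading off
an entry, with `χ_g(v) χ_g(u) = χ_g(u + v)`, gives the spectral form of the amplitude.
-/

open Matrix Finset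

theorem ZMod.neg_one_pow_val_add {R : Type*} [Ring R] (a b : ZMod 2) :
    (-1 : R) ^ (a + b).val = (-1) ^ a.val * (-1) ^ b.val := by
  rw [val_add, ← neg_one_pow_eq_pow_mod_two, pow_add]

theorem ZMod.sum_neg_one_pow_val_mul {R : Type*} [Ring R] (b : ZMod 2) :
    ∑ a : ZMod 2, (-1 : R) ^ (a * b).val = if b = 0 then 2 else 0 := by
  have huniv : (univ : Finset (ZMod 2)) = {0, 1} := rfl
  obtain rfl | rfl : b = 0 ∨ b = 1 := by decide +revert
  all_goals simp [huniv, ZMod.val_one]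

section CubelikeGraph

variable {ι : Type*}

noncomputable def cayleyMatrix (f : (ι → ZMod 2) → ℂ) : Matrix (ι → ZMod 2) (ι → ZMod 2) ℂ :=
  of fun u v ↦ f (u + v)

theorem smul_cayleyMatrix (c : ℂ) (f : (ι → ZMod 2) → ℂ) :
    c • cayleyMatrix f = cayleyMatrix (c • f) := by
  ext; rfl

variable [Fintype ι]

noncomputable def walsh (g x : ι → ZMod 2) : ℂ := (-1) ^ (∑ i, g i * x i).val

theorem walsh_comm (g x : ι → ZMod 2) : walsh g x = walsh x g := by
  simp only [walsh, mul_comm]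

theorem walsh_add_right (g x y : ι → ZMod 2) : walsh g (x + y) = walsh g x * walsh g y := by
  simp only [walsh, Pi.add_apply, mul_add, sum_add_distrib, ZMod.neg_one_pow_val_add]

theorem walsh_eq_prod (g x : ι → ZMod 2) : walsh g x = ∏ i, (-1 : ℂ) ^ (g i * x i).val := by
  classical
  unfold walsh
  induction (univ : Finset ι) using Finset.induction with
  | empty => simp
  | insert i s hi ih => rw [sum_insert hi, prod_insert hi, ZMod.neg_one_pow_val_add, ih]

variable [DecidableEq ι]

theorem sum_walsh (w : ι → ZMod 2) :
    ∑ g, walsh g w = if w = 0 then 2 ^ Fintype.card ι else 0 := by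
  simp only [walsh_eq_prod]
  rw [← Fintype.prod_sum (fun i a => (-1 : ℂ) ^ (a * w i).val)]
  simp only [ZMod.sum_neg_one_pow_val_mul]
  split_ifs with hw
  · simp [hw]
  · obtain ⟨i, hi⟩ := Function.ne_iff.mp hw
    exact prod_eq_zero (mem_univ i) (if_neg hi)

theorem sum_walsh_mul_walsh (p q : ι → ZMod 2) :
    ∑ g, walsh g p * walsh g q = if p = q then 2 ^ Fintype.card ι else 0 := by
  simp only [← walsh_add_right, sum_walsh, ← ZModModule.sub_eq_add p q, sub_eq_zero]

noncomputable def walshTransform (f : (ι → ZMod 2) → ℂ) (g : ι → ZMod 2) : ℂ :=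
  ∑ x, f x * walsh g x

theorem sum_walsh_mul_walshTransform (f : (ι → ZMod 2) → ℂ) (w : ι → ZMod 2) :
    ∑ g, walsh g w * walshTransform f g = 2 ^ Fintype.card ι * f w := by
  simp only [walshTransform, mul_sum]
  rw [sum_comm]
  simp [mul_left_comm (walsh _ w), ← mul_sum, sum_walsh_mul_walsh, mul_comm]

variable (ι) in
noncomputable def walshMatrix : Matrix (ι → ZMod 2) (ι → ZMod 2) ℂ := of walsh

theorem walshMatrix_mul_diagonal_mul_walshMatrix_apply (e : (ι → ZMod 2) → ℂ)
    (p q : ι → ZMod 2) :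
    (walshMatrix ι * diagonal e * walshMatrix ι) p q = ∑ g, walsh g p * walsh g q * e g := by
  rw [mul_apply]
  simp only [mul_diagonal, walshMatrix, of_apply, walsh_comm p]
  exact sum_congr rfl fun g _ ↦ mul_right_comm _ _ _

theorem walshMatrix_mul_self :
    walshMatrix ι * walshMatrix ι = (2 ^ Fintype.card ι : ℂ) • (1 : Matrix (ι → ZMod 2) _ ℂ) := by
  ext p q
  simpa [one_apply, sum_walsh_mul_walsh] using
    walshMatrix_mul_diagonal_mul_walshMatrix_apply (fun _ ↦ 1) p q

theorem walshMatrix_mul_smul_walshMatrix :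
    walshMatrix ι * ((2 ^ Fintype.card ι : ℂ)⁻¹ • walshMatrix ι) = 1 := by
  rw [Matrix.mul_smul, walshMatrix_mul_self, smul_smul, inv_mul_cancel₀ (by simp), one_smul]

theorem inv_walshMatrix : (walshMatrix ι)⁻¹ = (2 ^ Fintype.card ι : ℂ)⁻¹ • walshMatrix ι :=
  inv_eq_right_inv walshMatrix_mul_smul_walshMatrix

theorem isUnit_walshMatrix : IsUnit (walshMatrix ι) :=
  .of_mul_eq_one _ walshMatrix_mul_smul_walshMatrix

theorem walshTransform_smul (c : ℂ) (f : (ι → ZMod 2) → ℂ) :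
    walshTransform (c • f) = c • walshTransform f := by
  ext g
  simp [walshTransform, mul_sum, mul_assoc]

theorem cayleyMatrix_eq_walshMatrix_conj (f : (ι → ZMod 2) → ℂ) :
    cayleyMatrix f = walshMatrix ι * diagonal (walshTransform f) * (walshMatrix ι)⁻¹ := by
  ext p q
  rw [inv_walshMatrix, Matrix.mul_smul, Matrix.smul_apply,
    walshMatrix_mul_diagonal_mul_walshMatrix_apply]
  simp only [← walsh_add_right, sum_walsh_mul_walshTransform, cayleyMatrix, of_apply, smul_eq_mul]
  field_simp

theorem exp_cayleyMatrix_apply (f : (ι → ZMod 2) → ℂ) (p q : ι → ZMod 2) :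
    NormedSpace.exp (cayleyMatrix f) p q =
      (2 ^ Fintype.card ι)⁻¹ * ∑ g, walsh g (p + q) * Complex.exp (walshTransform f g) := by
  rw [cayleyMatrix_eq_walshMatrix_conj, exp_conj _ _ isUnit_walshMatrix, exp_diagonal,
    inv_walshMatrix, Matrix.mul_smul, Matrix.smul_apply,
    walshMatrix_mul_diagonal_mul_walshMatrix_apply]
  simp [walsh_add_right, Complex.exp_eq_exp_ℂ]

end CubelikeGraph

theorem cubelike_amplitude_spectral_form_general
    (n : ℕ) (f : (Fin n → ZMod 2) → ℤ)
    (A : Matrix (Fin n → ZMod 2) (Fin n → ZMod 2) ℂ)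
    (hA : ∀ u v, A u v = (f (u + v) : ℂ))
    (lam : (Fin n → ZMod 2) → ℂ)
    (hlam : ∀ g, lam g = ∑ x : Fin n → ZMod 2,
      (f x : ℂ) * (-1 : ℂ) ^ (∑ i, g i * x i : ZMod 2).val)
    (t : ℝ) :
    ∀ u v : Fin n → ZMod 2,
      NormedSpace.exp ((-(Complex.I * t)) • A) v u =
        (1 / (2 : ℂ) ^ n) * ∑ g : Fin n → ZMod 2,
          (-1 : ℂ) ^ (∑ i, g i * (u + v) i : ZMod 2).val *
            Complex.exp (-(Complex.I * t) * lam g) := by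
  intro u v
  have hA' : A = cayleyMatrix (fun x ↦ (f x : ℂ)) := ext fun u v ↦ hA u v
  have hlam' : lam = walshTransform (fun x ↦ (f x : ℂ)) := funext hlam
  rw [hA', hlam', smul_cayleyMatrix, exp_cayleyMatrix_apply, walshTransform_smul, add_comm v u]
  simp [walsh]

theorem cubelike_amplitude_spectral_form
    (n : ℕ) (hn : 0 < n) (f : (Fin n → ZMod 2) → ℤ)
    (A : Matrix (Fin n → ZMod 2) (Fin n → ZMod 2) ℂ)
    (hA : ∀ u v, A u v = (f (u + v) : ℂ))
    (lam : (Fin n → ZMod 2) → ℂ)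
    (hlam : ∀ g, lam g = ∑ x : Fin n → ZMod 2,
      (f x : ℂ) * (-1 : ℂ) ^ (∑ i, g i * x i : ZMod 2).val)
    (t : ℝ) :
    ∀ u v : Fin n → ZMod 2,
      NormedSpace.exp ((-(Complex.I * t)) • A) v u =
        (1 / (2 : ℂ) ^ n) * ∑ g : Fin n → ZMod 2,
          (-1 : ℂ) ^ (∑ i, g i * (u + v) i : ZMod 2).val *
            Complex.exp (-(Complex.I * t) * lam g) :=
  cubelike_amplitude_spectral_form_general n f A hA lam hlam t
end

section
/- Let n > 0, f : ℤ₂ⁿ → ℤ, and let A u v = f(u + v) be the adjacency matrix of Cay(ℤ₂ⁿ, f). Then the graph is periodic with period π: for every vertex u ∈ ℤ₂ⁿ, the (u,u) entry of exp(-(i π)·A) has absolute value 1. -/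
/-!
Writing `T s` for the permutation matrix of the translation `u ↦ u + s`, the adjacency matrix is
`A = ∑ s, f s • T s`. In `ℤ₂ⁿ` the `T s` are pairwise commuting involutions, and for an involution
`exp (z • T) = cosh z • 1 + sinh z • T`; at `z = -iπk` with `k ∈ ℤ` this is `(-1)ᵏ • 1`. Hence
`exp (-iπ A) = ± 1`.
-/

namespace NormedSpace

variable {𝔸 : Type*} [NormedRing 𝔸] [NormedAlgebra ℂ 𝔸]

/-- For an involution `P`, `(a, b) ↦ a • (1 + P) / 2 + b • (1 - P) / 2` is a ring homomorphism,
since `(1 ± P) / 2` are complementary idempotents. -/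
noncomputable def involutionSplitting {P : 𝔸} (hP : P * P = 1) : ℂ × ℂ →+* 𝔸 where
  toFun p := ((p.1 + p.2) / 2) • (1 : 𝔸) + ((p.1 - p.2) / 2) • P
  map_one' := by match_scalars <;> norm_num
  map_mul' p q := by
    simp only [Prod.fst_mul, Prod.snd_mul, mul_add, add_mul, smul_mul_smul_comm, one_mul, mul_one,
      hP]
    match_scalars <;> ring
  map_zero' := by match_scalars <;> norm_num
  map_add' p q := by
    simp only [Prod.fst_add, Prod.snd_add]
    match_scalars <;> ring

theorem continuous_involutionSplitting {P : 𝔸} (hP : P * P = 1) :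
    Continuous (involutionSplitting hP) :=
  show Continuous fun p : ℂ × ℂ => ((p.1 + p.2) / 2) • (1 : 𝔸) + ((p.1 - p.2) / 2) • P by
    fun_prop

variable [NormedAlgebra ℚ 𝔸]

theorem exp_smul_of_mul_self_eq_one {P : 𝔸} (hP : P * P = 1) (z : ℂ) :
    exp (z • P) = Complex.cosh z • (1 : 𝔸) + Complex.sinh z • P := by
  have hzP : z • P = involutionSplitting hP (z, -z) := by
    change _ = ((z + -z) / 2) • (1 : 𝔸) + ((z - -z) / 2) • P
    match_scalars <;> ring
  have hexp : exp ((z, -z) : ℂ × ℂ) = (Complex.exp z, Complex.exp (-z)) := by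
    ext <;> simp [Prod.fst_exp, Prod.snd_exp, Complex.exp_eq_exp_ℂ]
  rw [hzP, ← map_exp _ (continuous_involutionSplitting hP), hexp]
  rfl

theorem exp_neg_I_mul_pi_mul_int_smul_of_mul_self_eq_one {P : 𝔸} (hP : P * P = 1) (k : ℤ) :
    exp ((-(Complex.I * Real.pi) * k) • P) = (-1 : ℂ) ^ k • (1 : 𝔸) := by
  rw [show -(Complex.I * Real.pi) * k = -(↑(k * Real.pi) * Complex.I) by push_cast; ring,
    exp_smul_of_mul_self_eq_one hP, Complex.cosh_neg, Complex.sinh_neg, Complex.cosh_mul_I,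
    Complex.sinh_mul_I, ← Complex.ofReal_cos, ← Complex.ofReal_sin, Real.cos_int_mul_pi,
    Real.sin_int_mul_pi]
  simp

theorem exp_sum_neg_I_mul_pi_mul_int_smul [CompleteSpace 𝔸] {ι : Type*} (s : Finset ι)
    {P : ι → 𝔸} (hP : ∀ i, P i * P i = 1) (hcomm : ∀ i j, Commute (P i) (P j)) (k : ι → ℤ) :
    exp (∑ i ∈ s, (-(Complex.I * Real.pi) * k i) • P i) =
      (∏ i ∈ s, (-1 : ℂ) ^ k i) • (1 : 𝔸) := by
  classical
  induction s using Finset.induction_on with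
  | empty => simp
  | insert a t ha ih =>
    have hcomm_sum : Commute ((-(Complex.I * Real.pi) * k a) • P a)
        (∑ i ∈ t, (-(Complex.I * Real.pi) * k i) • P i) :=
      Commute.sum_right _ _ _ fun j _ => ((hcomm a j).smul_left _).smul_right _
    rw [Finset.sum_insert ha, Finset.prod_insert ha, exp_add_of_commute hcomm_sum, ih,
      exp_neg_I_mul_pi_mul_int_smul_of_mul_self_eq_one (hP a), smul_mul_smul_comm, one_mul]

end NormedSpace

namespace Matrix

variable {G : Type*} (R : Type*) [DecidableEq G]

def translationMatrix [AddGroup G] [Zero R] [One R] (s : G) : Matrix G G R :=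
  (Equiv.addRight s).permMatrix R

theorem translationMatrix_apply [AddGroup G] [Zero R] [One R] (s u v : G) :
    translationMatrix R s u v = if u + s = v then 1 else 0 := by
  simp [translationMatrix, PEquiv.toMatrix_apply, Equiv.toPEquiv_apply]

variable [Fintype G] [NonAssocSemiring R]

theorem translationMatrix_add [AddGroup G] (s t : G) :
    translationMatrix R (s + t) = translationMatrix R s * translationMatrix R t := by
  rw [translationMatrix, Equiv.addRight_add, permMatrix_mul]
  rfl

theorem translationMatrix_mul_self [AddGroup G] {s : G} (hs : s + s = 0) :
    translationMatrix R s * translationMatrix R s = 1 := by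
  rw [← translationMatrix_add, hs, translationMatrix, Equiv.addRight_zero, permMatrix_one]

theorem commute_translationMatrix [AddCommGroup G] (s t : G) :
    Commute (translationMatrix R s) (translationMatrix R t) := by
  rw [Commute, SemiconjBy, ← translationMatrix_add, ← translationMatrix_add, add_comm]

theorem eq_sum_smul_translationMatrix [AddGroup G] {A : Matrix G G R} {c : G → R}
    (hA : ∀ u v, A u v = c (-u + v)) : A = ∑ s, c s • translationMatrix R s := by
  ext u v
  simp [hA, sum_apply, translationMatrix_apply, ← eq_neg_add_iff_add_eq]

theorem exp_neg_I_mul_pi_smul_of_add_self_eq_zero [AddCommGroup G]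
    (hG : ∀ x : G, x + x = 0) (f : G → ℤ) {A : Matrix G G ℂ} (hA : ∀ u v, A u v = f (u + v)) :
    NormedSpace.exp (-(Complex.I * Real.pi) • A) = (∏ s, (-1 : ℂ) ^ f s) • (1 : Matrix G G ℂ) := by
  have hneg (x : G) : -x = x := neg_eq_of_add_eq_zero_right (hG x)
  have hA' : A = ∑ s, (f s : ℂ) • translationMatrix ℂ s :=
    eq_sum_smul_translationMatrix ℂ (by simpa [hneg] using hA)
  rw [hA', Finset.smul_sum]
  simp_rw [smul_smul]
  open scoped Norms.Operator in
  exact NormedSpace.exp_sum_neg_I_mul_pi_mul_int_smul Finset.univ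
    (fun s => translationMatrix_mul_self ℂ (hG s)) (commute_translationMatrix ℂ) f

end Matrix

theorem cubelike_periodic_pi_general
    (n : ℕ) (f : (Fin n → ZMod 2) → ℤ)
    (A : Matrix (Fin n → ZMod 2) (Fin n → ZMod 2) ℂ)
    (hA : ∀ u v, A u v = (f (u + v) : ℂ)) :
    ∀ u : Fin n → ZMod 2,
      ‖NormedSpace.exp ((-(Complex.I * Real.pi)) • A) u u‖ = 1 := by
  intro u
  rw [Matrix.exp_neg_I_mul_pi_smul_of_add_self_eq_zero
    (fun x => funext fun i => CharTwo.add_self_eq_zero (x i)) f hA]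
  simp [norm_prod]

theorem cubelike_periodic_pi
    (n : ℕ) (hn : 0 < n) (f : (Fin n → ZMod 2) → ℤ)
    (A : Matrix (Fin n → ZMod 2) (Fin n → ZMod 2) ℂ)
    (hA : ∀ u v, A u v = (f (u + v) : ℂ)) :
    ∀ u : Fin n → ZMod 2,
      ‖NormedSpace.exp ((-(Complex.I * Real.pi)) • A) u u‖ = 1 :=
  cubelike_periodic_pi_general n f A hA
end

section
/- Let A be the 4×4 complex adjacency matrix of the 4-cycle given by A = !![0,1,1,0; 1,0,0,1; 1,0,0,1; 0,1,1,0]. Then perfect state transfer occurs at time π/2 between vertices 0 and 3 and between vertices 1 and 2: the (3,0) entry and the (2,1) entry of exp(-(i π/2)·A) each have absolute value 1. -/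
/-!
Label vertex `k` of the 4-cycle by its two binary digits: the 4-cycle is then the 2-cube, and its
adjacency matrix is the sum of the two commuting involutions `flipBit0`, `flipBit1`, each flipping
one digit. For an involution `B` one has `exp (-(i t) B) = cos t - i sin t B`, so at `t = π/2` the
walk factors as `(-i flipBit0) (-i flipBit1) = -(flipBit0 * flipBit1)`, and this product is the
permutation matrix of the antipodal map `k ↦ 3 - k`.
-/

open Matrix

section Involution

variable {𝔸 : Type*} [Ring 𝔸] [Algebra ℂ 𝔸] [TopologicalSpace 𝔸] [IsTopologicalRing 𝔸]
  [ContinuousSMul ℂ 𝔸] [T2Space 𝔸]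

theorem exp_smul_of_mul_self_eq_one_s14 {B : 𝔸} (hB : B * B = 1) (z : ℂ) :
    NormedSpace.exp (z • B) = Complex.cosh z • 1 + Complex.sinh z • B := by
  have hB_even (n : ℕ) : B ^ (2 * n) = 1 := by rw [pow_mul, sq, hB, one_pow]
  rw [NormedSpace.exp_eq_tsum ℂ]
  refine HasSum.tsum_eq (HasSum.even_add_odd ?_ ?_)
  · convert (Complex.hasSum_cosh z).smul_const (1 : 𝔸) using 2 with n
    rw [smul_pow, hB_even, smul_smul, div_eq_inv_mul]
  · convert (Complex.hasSum_sinh z).smul_const B using 2 with n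
    rw [smul_pow, pow_succ B, hB_even, one_mul, smul_smul, div_eq_inv_mul]

theorem exp_neg_I_mul_smul_of_mul_self_eq_one {B : 𝔸} (hB : B * B = 1) (t : ℂ) :
    NormedSpace.exp ((-(Complex.I * t)) • B) =
      Complex.cos t • 1 - (Complex.I * Complex.sin t) • B := by
  rw [exp_smul_of_mul_self_eq_one_s14 hB, mul_comm, Complex.cosh_neg, Complex.sinh_neg,
    Complex.cosh_mul_I, Complex.sinh_mul_I, neg_smul, sub_eq_add_neg, mul_comm]

theorem exp_neg_I_pi_div_two_smul_of_mul_self_eq_one {B : 𝔸} (hB : B * B = 1) :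
    NormedSpace.exp ((-(Complex.I * (Real.pi / 2))) • B) = (-Complex.I) • B := by
  rw [exp_neg_I_mul_smul_of_mul_self_eq_one hB, Complex.cos_pi_div_two, Complex.sin_pi_div_two]
  simp

end Involution

theorem Matrix.exp_neg_I_pi_div_two_smul_add {m : Type*} [Fintype m] [DecidableEq m]
    {B C : Matrix m m ℂ} (hB : B * B = 1) (hC : C * C = 1) (hBC : Commute B C) :
    NormedSpace.exp ((-(Complex.I * (Real.pi / 2))) • (B + C)) = -(B * C) := by
  rw [smul_add, Matrix.exp_add_of_commute _ _ ((hBC.smul_left _).smul_right _),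
    exp_neg_I_pi_div_two_smul_of_mul_self_eq_one hB,
    exp_neg_I_pi_div_two_smul_of_mul_self_eq_one hC, smul_mul_smul_comm]
  simp

def flipBit0 : Matrix (Fin 4) (Fin 4) ℂ := !![0,1,0,0; 1,0,0,0; 0,0,0,1; 0,0,1,0]

def flipBit1 : Matrix (Fin 4) (Fin 4) ℂ := !![0,0,1,0; 0,0,0,1; 1,0,0,0; 0,1,0,0]

theorem flipBit0_mul_self : flipBit0 * flipBit0 = 1 := by
  ext i j
  fin_cases i <;> fin_cases j <;> simp [flipBit0, Matrix.mul_apply, Fin.sum_univ_four]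

theorem flipBit1_mul_self : flipBit1 * flipBit1 = 1 := by
  ext i j
  fin_cases i <;> fin_cases j <;> simp [flipBit1, Matrix.mul_apply, Fin.sum_univ_four]

theorem flipBit0_mul_flipBit1 :
    flipBit0 * flipBit1 = !![0,0,0,1; 0,0,1,0; 0,1,0,0; 1,0,0,0] := by
  ext i j
  fin_cases i <;> fin_cases j <;> simp [flipBit0, flipBit1, Matrix.mul_apply, Fin.sum_univ_four]

theorem flipBit1_mul_flipBit0 :
    flipBit1 * flipBit0 = !![0,0,0,1; 0,0,1,0; 0,1,0,0; 1,0,0,0] := by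
  ext i j
  fin_cases i <;> fin_cases j <;> simp [flipBit0, flipBit1, Matrix.mul_apply, Fin.sum_univ_four]

theorem commute_flipBit0_flipBit1 : Commute flipBit0 flipBit1 :=
  flipBit0_mul_flipBit1.trans flipBit1_mul_flipBit0.symm

theorem cycle4_adjacency_eq_flipBit0_add_flipBit1 :
    !![(0 : ℂ),1,1,0; 1,0,0,1; 1,0,0,1; 0,1,1,0] = flipBit0 + flipBit1 := by
  ext i j
  fin_cases i <;> fin_cases j <;> simp [flipBit0, flipBit1]

theorem cycle4_pst
    (A : Matrix (Fin 4) (Fin 4) ℂ)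
    (hA : A = !![0,1,1,0; 1,0,0,1; 1,0,0,1; 0,1,1,0]) :
    ‖NormedSpace.exp ((-(Complex.I * (Real.pi / 2))) • A) 3 0‖ = 1 ∧
    ‖NormedSpace.exp ((-(Complex.I * (Real.pi / 2))) • A) 2 1‖ = 1 := by
  rw [hA, cycle4_adjacency_eq_flipBit0_add_flipBit1,
    Matrix.exp_neg_I_pi_div_two_smul_add flipBit0_mul_self flipBit1_mul_self
      commute_flipBit0_flipBit1, flipBit0_mul_flipBit1]
  simp
end

section
/- Let A be the 4×4 complex adjacency matrix of the 4-cycle given by A = !![0,1,1,0; 1,0,0,1; 1,0,0,1; 0,1,1,0]. Then the graph is periodic with period π: for every u ∈ Fin 4, the (u,u) entry of exp(-(i π)·A) has absolute value 1. -/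
/-!
The 4-cycle is the Cartesian product `K₂ □ K₂`: its adjacency matrix is the sum of the two
commuting perfect matchings `{01, 23}` and `{02, 13}`, both involutions. For an involution `s`,
`exp (z • s) = cosh z + sinh z • s`, so `exp (-(iπ) • s) = cos π - i sin π • s = -1`; hence
`exp (-(iπ) • A) = (-1) * (-1) = 1`.
-/

open Matrix

section Involution

open NormedSpace

variable {𝔸 : Type*} [NormedRing 𝔸] [NormedAlgebra ℂ 𝔸] [CompleteSpace 𝔸]

theorem exp_smul_of_mul_self_eq_one_s15 {s : 𝔸} (hs : s * s = 1) (z : ℂ) :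
    exp (z • s) = Complex.cosh z • 1 + Complex.sinh z • s := by
  have hpow (k : ℕ) : s ^ (2 * k) = 1 := by rw [pow_mul, sq, hs, one_pow]
  refine (exp_series_hasSum_exp' (𝕂 := ℂ) (z • s)).unique (HasSum.even_add_odd ?_ ?_)
  · convert (Complex.hasSum_cosh z).smul_const (1 : 𝔸) using 2 with k
    rw [smul_pow, hpow, smul_smul, div_eq_inv_mul]
  · convert (Complex.hasSum_sinh z).smul_const s using 2 with k
    rw [smul_pow, pow_succ s, hpow, one_mul, smul_smul, div_eq_inv_mul]

theorem exp_neg_I_mul_pi_smul_of_mul_self_eq_one {s : 𝔸} (hs : s * s = 1) :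
    exp ((-(Complex.I * Real.pi)) • s) = -1 := by
  have h : -(Complex.I * Real.pi) = ((-Real.pi : ℝ) : ℂ) * Complex.I := by push_cast; ring
  rw [exp_smul_of_mul_self_eq_one_s15 hs, h, Complex.cosh_mul_I, Complex.sinh_mul_I,
    ← Complex.ofReal_cos, ← Complex.ofReal_sin, Real.cos_neg, Real.cos_pi, Real.sin_neg,
    Real.sin_pi]
  simp

theorem exp_neg_I_mul_pi_smul_add_of_commute_of_mul_self_eq_one [NormedAlgebra ℚ 𝔸] {s t : 𝔸}
    (hs : s * s = 1) (ht : t * t = 1) (hst : Commute s t) :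
    exp ((-(Complex.I * Real.pi)) • (s + t)) = 1 := by
  rw [smul_add, NormedSpace.exp_add_of_commute ((hst.smul_left _).smul_right _),
    exp_neg_I_mul_pi_smul_of_mul_self_eq_one hs, exp_neg_I_mul_pi_smul_of_mul_self_eq_one ht,
    neg_one_mul, neg_neg]

end Involution

theorem cycle4_periodic_pi
    (A : Matrix (Fin 4) (Fin 4) ℂ)
    (hA : A = !![0,1,1,0; 1,0,0,1; 1,0,0,1; 0,1,1,0]) :
    ∀ u : Fin 4,
      ‖NormedSpace.exp ((-(Complex.I * Real.pi)) • A) u u‖ = 1 := by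
  intro u
  set B : Matrix (Fin 4) (Fin 4) ℂ := !![0,1,0,0; 1,0,0,0; 0,0,0,1; 0,0,1,0]
  set C : Matrix (Fin 4) (Fin 4) ℂ := !![0,0,1,0; 0,0,0,1; 1,0,0,0; 0,1,0,0]
  have hAB : A = B + C := by
    subst hA; ext i j; fin_cases i <;> fin_cases j <;> simp [B, C]
  have hB : B * B = 1 := by
    ext i j; fin_cases i <;> fin_cases j <;> simp [B, mul_apply, Fin.sum_univ_four]
  have hC : C * C = 1 := by
    ext i j; fin_cases i <;> fin_cases j <;> simp [C, mul_apply, Fin.sum_univ_four]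
  have hBC : Commute B C := by
    ext i j; fin_cases i <;> fin_cases j <;> simp [B, C, mul_apply, Fin.sum_univ_four]
  have hexp : NormedSpace.exp ((-(Complex.I * Real.pi)) • A) = 1 := by
    open scoped Matrix.Norms.Operator in
    exact hAB ▸ exp_neg_I_mul_pi_smul_add_of_commute_of_mul_self_eq_one hB hC hBC
  rw [hexp, one_apply_eq, norm_one]
end
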